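/- Let (W,S) be a Coxeter system, let v ∈ W and s ∈ S, and let α := v·α_s = {vw : w ∈ W, ℓ(sw) > ℓ(w)} be the corresponding root, with associated reflection r := v s v⁻¹. Let R = c·⟨s',t'⟩ be a spherical residue of rank 2, i.e. c ∈ W, s' ≠ t' ∈ S and m_{s't'} < ∞. Then exactly one of the following holds: (a) R ⊆ α; (b) R ∩ α = ∅; (c) r·R = R (the set {rx : x ∈ R} equals R). -/

import Mathlib

namespace CoxeterAux

open CoxeterSystem List Function

attribute [local instance] Classical.propDecidable

variable {B : Type*} {W : Type*} [Group W] {M : CoxeterMatrix B} (cs : CoxeterSystem M W)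

local prefix:max "σ" => cs.simple
local prefix:100 "ℓ" => cs.length
local prefix:100 "π" => cs.wordProd

/-! ### The sign representation on `W × ZMod 2` (Bourbaki), used to prove strong exchange. -/

lemma hcancel (i : B) (z : W) : σ i * (σ i * z * σ i) * σ i = z := by
  simp [mul_assoc, cs.simple_mul_simple_self, cs.simple_mul_simple_cancel_left]

noncomputable def eta (i : B) : (W × ZMod 2) → (W × ZMod 2) :=
  fun p => (σ i * p.1 * σ i, p.2 + if p.1 = σ i then 1 else 0)

lemma eta_involutive (i : B) : Involutive (eta cs i) := by
  intro ⟨t, ε⟩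
  simp only [eta]
  have h2 : (σ i * t * σ i = σ i) ↔ (t = σ i) := by
    constructor
    · intro h
      have h' := hcancel cs i t
      rw [h] at h'
      rw [← h', cs.simple_mul_simple_self, one_mul]
    · rintro rfl
      rw [cs.simple_mul_simple_self, one_mul]
  simp only [hcancel cs i t, h2]
  refine Prod.ext rfl ?_
  show ε + (if t = σ i then 1 else 0) + (if t = σ i then 1 else 0) = ε
  rw [add_assoc, CharTwo.add_self_eq_zero, add_zero]

noncomputable def etaPerm (i : B) : Equiv.Perm (W × ZMod 2) :=
  (eta_involutive cs i).toPerm _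

@[simp] lemma etaPerm_apply (i : B) (p : W × ZMod 2) : etaPerm cs i p = eta cs i p := rfl

/-- The sequence of "reflections" of the dihedral subgroup generated by `σ i, σ j`. -/
def cseq (i j : B) (k : ℕ) : W := (σ j * σ i) ^ k * σ j

lemma cseq_conj (i j : B) (k n : ℕ) :
    ((σ i * σ j) ^ n)⁻¹ * cseq cs i j k * (σ i * σ j) ^ n = cseq cs i j (k + 2 * n) := by
  have hsemi : SemiconjBy (σ j) (σ i * σ j) (σ j * σ i) := by
    unfold SemiconjBy; group
  have h1 : (σ j) * (σ i * σ j) ^ n = (σ j * σ i) ^ n * σ j := hsemi.pow_right n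
  have h2 : ((σ i * σ j) ^ n)⁻¹ = (σ j * σ i) ^ n := by
    rw [← inv_pow]
    congr 1
    rw [mul_inv_rev, cs.inv_simple, cs.inv_simple]
  rw [cseq, cseq, h2, mul_assoc, mul_assoc, h1, ← mul_assoc, ← mul_assoc, ← pow_add, ← pow_add]
  congr 2
  omega

lemma cseq_period (i j : B) (k : ℕ) : cseq cs i j (M i j + k) = cseq cs i j k := by
  rw [cseq, cseq, add_comm, pow_add, mul_assoc, cs.simple_mul_simple_pow' i j, one_mul]

lemma pow_cancel (i j : B) (n : ℕ) : (σ i * σ j) ^ n * (σ j * σ i) ^ n = 1 := by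
  induction n with
  | zero => simp
  | succ n ih =>
    rw [pow_succ, pow_succ']
    calc (σ i * σ j) ^ n * (σ i * σ j) * (σ j * σ i * (σ j * σ i) ^ n)
        = (σ i * σ j) ^ n * (σ i * (σ j * (σ j * (σ i * (σ j * σ i) ^ n)))) := by
          simp only [mul_assoc]
      _ = (σ i * σ j) ^ n * (σ i * (σ i * (σ j * σ i) ^ n)) := by
          rw [cs.simple_mul_simple_cancel_left]
      _ = (σ i * σ j) ^ n * (σ j * σ i) ^ n := by
          rw [cs.simple_mul_simple_cancel_left]
      _ = 1 := ih

lemma pow_inv_eq (i j : B) (n : ℕ) : (σ j * σ i) ^ n = ((σ i * σ j) ^ n)⁻¹ :=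
  eq_inv_of_mul_eq_one_right (pow_cancel cs i j n)

lemma etaPerm_mul_pow_apply (i j : B) (n : ℕ) (t : W) (ε : ZMod 2) :
    ((etaPerm cs i * etaPerm cs j) ^ n) (t, ε) =
      ((σ i * σ j) ^ n * t * (σ j * σ i) ^ n,
        ε + ∑ l ∈ Finset.range (2 * n), (if t = cseq cs i j l then (1 : ZMod 2) else 0)) := by
  induction n with
  | zero => simp
  | succ n ih =>
    have hj0 : cseq cs i j 0 = σ j := by rw [cseq, pow_zero, one_mul]
    have hc0 : ((σ i * σ j) ^ n)⁻¹ * σ j * (σ i * σ j) ^ n = cseq cs i j (2 * n) := by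
      have h := cseq_conj cs i j 0 n
      rwa [hj0, zero_add] at h
    have hj1 : cseq cs i j 1 = σ j * σ i * σ j := by rw [cseq, pow_one]
    have hc1 : ((σ i * σ j) ^ n)⁻¹ * (σ j * σ i * σ j) * (σ i * σ j) ^ n
        = cseq cs i j (2 * n + 1) := by
      have h := cseq_conj cs i j 1 n
      rw [hj1] at h
      rwa [add_comm 1 (2 * n)] at h
    have e1 : ((σ i * σ j) ^ n * t * (σ j * σ i) ^ n = σ j) ↔ (t = cseq cs i j (2 * n)) := by
      rw [pow_inv_eq cs i j n]
      constructor
      · intro h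
        have hg : t = ((σ i * σ j) ^ n)⁻¹ * ((σ i * σ j) ^ n * t * ((σ i * σ j) ^ n)⁻¹) *
            (σ i * σ j) ^ n := by group
        rw [h, hc0] at hg
        exact hg
      · intro h
        rw [h, ← hc0]
        group
    have e2 : (σ j * ((σ i * σ j) ^ n * t * (σ j * σ i) ^ n) * σ j = σ i) ↔
        (t = cseq cs i j (2 * n + 1)) := by
      rw [pow_inv_eq cs i j n]
      constructor
      · intro h
        have h' : (σ i * σ j) ^ n * t * ((σ i * σ j) ^ n)⁻¹ = σ j * σ i * σ j := by
          have hcg := congrArg (fun z => σ j * z * σ j) h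
          simpa [mul_assoc, cs.simple_mul_simple_cancel_left] using hcg
        have hg : t = ((σ i * σ j) ^ n)⁻¹ * ((σ i * σ j) ^ n * t * ((σ i * σ j) ^ n)⁻¹) *
            (σ i * σ j) ^ n := by group
        rw [h', hc1] at hg
        exact hg
      · intro h
        rw [h, ← hc1]
        have hgr : (σ i * σ j) ^ n * (((σ i * σ j) ^ n)⁻¹ * (σ j * σ i * σ j) * (σ i * σ j) ^ n) *
            ((σ i * σ j) ^ n)⁻¹ = σ j * σ i * σ j := by group
        rw [hgr]
        simp [mul_assoc, cs.simple_mul_simple_self, cs.simple_mul_simple_cancel_left]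
    rw [pow_succ', Equiv.Perm.mul_apply, ih, Equiv.Perm.mul_apply]
    simp only [etaPerm_apply, eta]
    refine Prod.ext ?_ ?_
    · show σ i * (σ j * ((σ i * σ j) ^ n * t * (σ j * σ i) ^ n) * σ j) * σ i
        = (σ i * σ j) ^ (n + 1) * t * (σ j * σ i) ^ (n + 1)
      rw [pow_succ' (σ i * σ j) n, pow_succ (σ j * σ i) n]
      simp only [mul_assoc]
    · show ε + (∑ l ∈ Finset.range (2 * n), (if t = cseq cs i j l then (1 : ZMod 2) else 0))
          + (if (σ i * σ j) ^ n * t * (σ j * σ i) ^ n = σ j then (1 : ZMod 2) else 0)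
          + (if σ j * ((σ i * σ j) ^ n * t * (σ j * σ i) ^ n) * σ j = σ i then (1 : ZMod 2) else 0)
        = ε + ∑ l ∈ Finset.range (2 * (n + 1)), (if t = cseq cs i j l then (1 : ZMod 2) else 0)
      have h2n : 2 * (n + 1) = (2 * n) + 1 + 1 := by ring
      rw [h2n, Finset.sum_range_succ, Finset.sum_range_succ]
      simp only [e1, e2]
      ring

lemma liftable : M.IsLiftable (fun i => etaPerm cs i) := by
  intro i j
  apply Equiv.ext
  rintro ⟨t, ε⟩
  rw [etaPerm_mul_pow_apply]
  have hp : (σ i * σ j) ^ M i j = 1 := cs.simple_mul_simple_pow i j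
  have hp' : (σ j * σ i) ^ M i j = 1 := cs.simple_mul_simple_pow' i j
  refine Prod.ext ?_ ?_
  · show (σ i * σ j) ^ M i j * t * (σ j * σ i) ^ M i j = t
    rw [hp, hp', one_mul, mul_one]
  · show ε + ∑ l ∈ Finset.range (2 * M i j), (if t = cseq cs i j l then (1 : ZMod 2) else 0) = ε
    have h2 : 2 * M i j = M i j + M i j := by ring
    rw [h2, Finset.sum_range_add]
    have hper : ∀ l, cseq cs i j (M i j + l) = cseq cs i j l := fun l => cseq_period cs i j l
    simp only [hper]
    rw [CharTwo.add_self_eq_zero, add_zero]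

/-- The Bourbaki homomorphism. -/
noncomputable def phi : W →* Equiv.Perm (W × ZMod 2) :=
  cs.lift ⟨fun i => etaPerm cs i, liftable cs⟩

lemma phi_simple (i : B) : phi cs (σ i) = etaPerm cs i :=
  cs.lift_apply_simple (liftable cs) i

/-- Parity of the number of occurrences in the right inversion sequence. -/
noncomputable def nu (w t : W) : ZMod 2 := ((phi cs w) (t, 0)).2

lemma phi_wordProd (ω : List B) (t : W) (ε : ZMod 2) :
    phi cs (π ω) (t, ε) = (π ω * t * (π ω)⁻¹, ε + ((cs.rightInvSeq ω).count t : ZMod 2)) := by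
  induction ω generalizing ε with
  | nil => simp
  | cons i ω ih =>
    rw [cs.wordProd_cons, map_mul, Equiv.Perm.mul_apply, ih, phi_simple]
    simp only [etaPerm_apply, eta]
    have hris : cs.rightInvSeq (i :: ω) = ((π ω)⁻¹ * σ i * π ω) :: cs.rightInvSeq ω := rfl
    refine Prod.ext ?_ ?_
    · show σ i * (π ω * t * (π ω)⁻¹) * σ i = σ i * π ω * t * (σ i * π ω)⁻¹
      rw [mul_inv_rev, cs.inv_simple]
      group
    · show ε + ((cs.rightInvSeq ω).count t : ZMod 2)
          + (if π ω * t * (π ω)⁻¹ = σ i then (1 : ZMod 2) else 0)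
        = ε + (((cs.rightInvSeq (i :: ω)).count t : ℕ) : ZMod 2)
      have hiff : (π ω * t * (π ω)⁻¹ = σ i) ↔ (t = (π ω)⁻¹ * σ i * π ω) := by
        constructor
        · intro h; rw [← h]; group
        · intro h; rw [h]; group
      rw [hris]
      rw [List.count_cons]
      push_cast
      rw [if_congr hiff rfl rfl]
      simp only [beq_iff_eq, eq_comm (a := ((π ω)⁻¹ * σ i * π ω))]
      rw [add_assoc]

lemma phi_apply (w t : W) (ε : ZMod 2) :
    phi cs w (t, ε) = (w * t * w⁻¹, ε + nu cs w t) := by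
  obtain ⟨ω, rfl⟩ := cs.wordProd_surjective w
  rw [phi_wordProd, nu, phi_wordProd, zero_add]

lemma nu_wordProd (ω : List B) (t : W) :
    nu cs (π ω) t = ((cs.rightInvSeq ω).count t : ZMod 2) := by
  rw [nu, phi_wordProd, zero_add]

lemma nu_mul (w₁ w₂ t : W) :
    nu cs (w₁ * w₂) t = nu cs w₂ t + nu cs w₁ (w₂ * t * w₂⁻¹) := by
  have h : phi cs (w₁ * w₂) (t, 0) = phi cs w₁ (phi cs w₂ (t, 0)) := by
    rw [map_mul, Equiv.Perm.mul_apply]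
  rw [nu, h, phi_apply, phi_apply, zero_add]

lemma nu_simple (i : B) (t : W) : nu cs (σ i) t = if t = σ i then 1 else 0 := by
  rw [nu, phi_simple]
  show (eta cs i (t, 0)).2 = _
  simp [eta]

lemma nu_one' (t : W) : nu cs 1 t = 0 := by
  rw [nu, map_one]
  rfl

lemma nu_inv_conj (w a : W) : nu cs w⁻¹ (w * a * w⁻¹) = nu cs w a := by
  have h0 : nu cs (w⁻¹ * w) a = 0 := by rw [inv_mul_cancel]; exact nu_one' cs a
  rw [nu_mul] at h0
  have h1 := congrArg (fun z => nu cs w a + z) h0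
  simp only [add_zero] at h1
  rw [← add_assoc, CharTwo.add_self_eq_zero, zero_add] at h1
  exact h1

lemma nu_self {t : W} (ht : cs.IsReflection t) : nu cs t t = 1 := by
  obtain ⟨u, i, rfl⟩ := ht
  rw [nu_mul]
  have h1 : u⁻¹ * (u * σ i * u⁻¹) * u⁻¹⁻¹ = σ i := by group
  rw [h1, nu_mul]
  have h2 : σ i * σ i * (σ i)⁻¹ = σ i := by group
  rw [h2, nu_simple, if_pos rfl]
  rw [nu_inv_conj]
  rw [show nu cs u σ i + (1 + nu cs u σ i) = (nu cs u σ i + nu cs u σ i) + 1 by ring,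
    CharTwo.add_self_eq_zero, zero_add]

lemma length_mul_lt_of_nu_eq_one :
    ∀ n (w t : W), ℓ w ≤ n → cs.IsReflection t → nu cs w t = 1 → ℓ (w * t) < ℓ w := by
  intro n
  induction n with
  | zero =>
    intro w t hw _ hnu
    have hw1 : w = 1 := cs.length_eq_zero_iff.mp (Nat.le_zero.mp hw)
    rw [hw1, nu_one'] at hnu
    exact absurd hnu (by decide)
  | succ n ih =>
    intro w t hw ht hnu
    by_cases hw1 : w = 1
    · rw [hw1, nu_one'] at hnu
      exact absurd hnu (by decide)
    obtain ⟨k, hk⟩ := cs.exists_rightDescent_of_ne_one hw1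
    by_cases htk : t = σ k
    · rw [htk]; exact hk
    · have hww : w = (w * σ k) * σ k := by
        rw [mul_assoc, cs.simple_mul_simple_self, mul_one]
      have hlen' : ℓ (w * σ k) < ℓ w := hk
      have hnu' : nu cs (w * σ k) (σ k * t * σ k) = 1 := by
        have h := hnu
        rw [hww] at h
        rw [nu_mul, nu_simple, if_neg htk, zero_add, cs.inv_simple] at h
        exact h
      have hreft' : cs.IsReflection (σ k * t * σ k) := by
        rw [show σ k * t * σ k = σ k * t * (σ k)⁻¹ by rw [cs.inv_simple]]
        exact ht.conj (σ k)
      have hlt : ℓ ((w * σ k) * (σ k * t * σ k)) < ℓ (w * σ k) :=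
        ih (w * σ k) (σ k * t * σ k) (by omega) hreft' hnu'
      have hwt : (w * σ k) * (σ k * t * σ k) = w * t * σ k := by
        calc w * σ k * (σ k * t * σ k) = w * (σ k * (σ k * (t * σ k))) := by
              simp only [mul_assoc]
        _ = w * (t * σ k) := by rw [cs.simple_mul_simple_cancel_left]
        _ = w * t * σ k := by rw [mul_assoc]
      rw [hwt] at hlt
      have h3 : ℓ (w * t) ≤ ℓ (w * t * σ k) + 1 := by
        have hcc : w * t * σ k * σ k = w * t := by
          rw [mul_assoc, cs.simple_mul_simple_self, mul_one]
        rcases cs.length_mul_simple (w * t * σ k) k with h | h <;> rw [hcc] at h <;> omega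
      omega

lemma nu_eq_one_of_isRightInversion {w t : W} (ht : cs.IsReflection t)
    (h : ℓ (w * t) < ℓ w) : nu cs w t = 1 := by
  by_contra hne
  have h0 : nu cs w t = 0 := by
    have hall : ∀ a : ZMod 2, a ≠ 1 → a = 0 := by decide
    exact hall _ hne
  have hwt : nu cs (w * t) t = 1 := by
    rw [nu_mul]
    have httt : t * t * t⁻¹ = t := by group
    rw [httt, nu_self cs ht, h0, add_zero]
  have hfin := length_mul_lt_of_nu_eq_one cs (ℓ (w * t)) (w * t) t le_rfl ht hwt
  rw [mul_assoc, ht.mul_self, mul_one] at hfin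
  omega

/-- **Exchange property** for a simple reflection on the right. -/
lemma exchange {ω : List B} (hω : cs.IsReduced ω) {j : B}
    (h : ℓ (π ω * σ j) < ℓ (π ω)) :
    ∃ k < ω.length, π ω * σ j = π (ω.eraseIdx k) := by
  have h1 : nu cs (π ω) (σ j) = 1 :=
    nu_eq_one_of_isRightInversion cs (cs.isReflection_simple j) h
  rw [nu_wordProd] at h1
  have hmem : σ j ∈ cs.rightInvSeq ω := by
    by_contra hnm
    rw [List.count_eq_zero_of_not_mem hnm] at h1
    exact absurd h1 (by decide)
  obtain ⟨k, hk, hkeq⟩ := List.mem_iff_getElem.mp hmem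
  rw [cs.length_rightInvSeq] at hk
  refine ⟨k, hk, ?_⟩
  have hgd : (cs.rightInvSeq ω).getD k 1 = σ j := by
    rw [List.getD_eq_getElem _ _ (by rw [cs.length_rightInvSeq]; exact hk)]
    exact hkeq
  rw [← hgd, cs.wordProd_mul_getD_rightInvSeq]

/-- **Lifting lemma.** -/
lemma lifting {x : W} {i j : B} (h1 : ℓ x < ℓ (σ i * x))
    (h2 : ℓ (σ i * (x * σ j)) < ℓ (x * σ j)) :
    σ i * x = x * σ j := by
  have hix : ℓ (σ i * x) = ℓ x + 1 := by
    rcases cs.length_simple_mul x i with h | h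
    · exact h
    · omega
  have hxj : ℓ (x * σ j) = ℓ x + 1 := by
    have hne := cs.length_mul_simple_ne x j
    rcases cs.length_mul_simple x j with h | h
    · exact h
    · exfalso
      have hb := cs.length_mul_simple (σ i * x) j
      rw [mul_assoc] at hb
      omega
  obtain ⟨ω, hlen, hxw⟩ := cs.exists_reduced_word x
  have hlen' : ℓ x = ω.length := hxw ▸ hlen
  have hred : cs.IsReduced (i :: ω) := by
    show ℓ (π (i :: ω)) = (i :: ω).length
    rw [cs.wordProd_cons, ← hxw, hix, List.length_cons, hlen']
  have hlt : ℓ (π (i :: ω) * σ j) < ℓ (π (i :: ω)) := by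
    rw [cs.wordProd_cons, ← hxw, mul_assoc, hix]
    exact lt_of_lt_of_le h2 hxj.le
  obtain ⟨k, hk, heq⟩ := exchange cs hred hlt
  rw [cs.wordProd_cons, ← hxw] at heq
  cases k with
  | zero =>
    have herase : (i :: ω).eraseIdx 0 = ω := rfl
    rw [herase, ← hxw] at heq
    have hmul := congrArg (fun z => z * σ j) heq
    rw [mul_assoc, mul_assoc, cs.simple_mul_simple_self, mul_one] at hmul
    exact hmul
  | succ k' =>
    exfalso
    have herase : (i :: ω).eraseIdx (k' + 1) = i :: ω.eraseIdx k' := rfl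
    rw [herase, cs.wordProd_cons] at heq
    have heq2 : x * σ j = π (ω.eraseIdx k') := by
      calc x * σ j = σ i * (σ i * (x * σ j)) := (cs.simple_mul_simple_cancel_left i).symm
      _ = σ i * (σ i * x * σ j) := by rw [mul_assoc]
      _ = σ i * (σ i * π (ω.eraseIdx k')) := by rw [heq]
      _ = π (ω.eraseIdx k') := cs.simple_mul_simple_cancel_left i
    have hlb : ℓ (x * σ j) ≤ (ω.eraseIdx k').length := heq2 ▸ cs.length_wordProd_le _
    have hk' : k' < ω.length := by simpa using hk
    have hel := List.length_eraseIdx_add_one hk'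
    omega

end CoxeterAux

open CoxeterAux

/-- **Lemma (residue and root).** Let `(W, S)` be a Coxeter system, `v ∈ W`, `s ∈ S`, and let
`α := v · α_s` be the root obtained by translating the simple root
`α_s = {w ∈ W | ℓ(sw) > ℓ(w)}` by `v`, with associated reflection `r = v s v⁻¹`. Let
`R = c · ⟨s', t'⟩` be a spherical residue of rank `2` (`s' ≠ t'` and `m s' t' < ∞`). Then
exactly one of the following holds: (a) `R ⊆ α`; (b) `R ∩ α = ∅`; (c) `r · R = R`. -/
theorem residue_and_root_trichotomy
    {B : Type*} [Fintype B] {W : Type*} [Group W] {M : CoxeterMatrix B}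
    (cs : CoxeterSystem M W) (v : W) (s : B)
    (α : Set W)
    (hα : α = (fun w => v * w) '' {w : W | cs.length w < cs.length (cs.simple s * w)})
    (r : W) (hr : r = v * cs.simple s * v⁻¹)
    (c : W) (s' t' : B) (hst : s' ≠ t')
    (hsph : orderOf (cs.simple s' * cs.simple t') ≠ 0)
    (R : Set W)
    (hR : R = (fun g => c * g) ''
      (Subgroup.closure {cs.simple s', cs.simple t'} : Set W)) :
    (R ⊆ α ∧ ¬(R ∩ α = ∅) ∧ ¬((fun x => r * x) '' R = R)) ∨
    (¬(R ⊆ α) ∧ R ∩ α = ∅ ∧ ¬((fun x => r * x) '' R = R)) ∨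
    (¬(R ⊆ α) ∧ ¬(R ∩ α = ∅) ∧ (fun x => r * x) '' R = R) := by
  classical
  set H : Subgroup W := Subgroup.closure {cs.simple s', cs.simple t'} with hH
  -- membership criteria
  have mem_α : ∀ x : W, x ∈ α ↔ cs.length (v⁻¹ * x) < cs.length (cs.simple s * (v⁻¹ * x)) := by
    intro x
    rw [hα]
    constructor
    · rintro ⟨w, hw, rfl⟩
      simpa using hw
    · intro h
      exact ⟨v⁻¹ * x, h, by simp⟩
  have notmem_α : ∀ x : W, x ∉ α ↔
      cs.length (cs.simple s * (v⁻¹ * x)) < cs.length (v⁻¹ * x) := by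
    intro x
    rw [mem_α]
    have := cs.length_simple_mul_ne (v⁻¹ * x) s
    omega
  -- reflection swaps the two sides of the wall
  have r_mem_iff : ∀ x : W, r * x ∈ α ↔ x ∉ α := by
    intro x
    rw [mem_α, notmem_α, hr]
    have h1 : v⁻¹ * (v * cs.simple s * v⁻¹ * x) = cs.simple s * (v⁻¹ * x) := by group
    rw [h1, cs.simple_mul_simple_cancel_left]
  have hrr : r * r = 1 := by
    rw [hr]
    have : v * cs.simple s * v⁻¹ * (v * cs.simple s * v⁻¹)
        = v * (cs.simple s * cs.simple s) * v⁻¹ := by group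
    rw [this, cs.simple_mul_simple_self, mul_one, mul_inv_cancel]
  have mem_R : ∀ x : W, x ∈ R ↔ ∃ h ∈ H, x = c * h := by
    intro x
    rw [hR]
    constructor
    · rintro ⟨g, hg, rfl⟩; exact ⟨g, hg, rfl⟩
    · rintro ⟨h, hh, rfl⟩; exact ⟨h, hh, rfl⟩
  have hcR : c ∈ R := (mem_R c).mpr ⟨1, H.one_mem, (mul_one c).symm⟩
  have hs'H : cs.simple s' ∈ H := Subgroup.subset_closure (by simp)
  have ht'H : cs.simple t' ∈ H := Subgroup.subset_closure (by simp)
  have rmul_R : ∀ x ∈ R, ∀ g ∈ H, x * g ∈ R := by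
    intro x hx g hg
    obtain ⟨h, hh, rfl⟩ := (mem_R x).mp hx
    exact (mem_R _).mpr ⟨h * g, H.mul_mem hh hg, by group⟩
  -- the crossing lemma: if some g ∈ H moves x across the wall, there is an adjacent crossing
  have crossing : ∀ g ∈ H, ∀ x ∈ R,
      ((x ∈ α ∧ x * g ∉ α) ∨ (x ∉ α ∧ x * g ∈ α)) →
      ∃ w ∈ R, ∃ u : B, (u = s' ∨ u = t') ∧
        ((w ∈ α ∧ w * cs.simple u ∉ α) ∨ (w ∉ α ∧ w * cs.simple u ∈ α)) := by
    intro g hg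
    induction hg using Subgroup.closure_induction with
    | mem y hy =>
      intro x hx hcross
      rcases hy with hy | hy
      · exact ⟨x, hx, s', Or.inl rfl, by rw [← hy]; exact hcross⟩
      · exact ⟨x, hx, t', Or.inr rfl, by rw [← hy]; exact hcross⟩
    | one =>
      intro x hx hcross
      rw [mul_one] at hcross
      tauto
    | mul a b ha hb iha ihb =>
      intro x hx hcross
      by_cases hxa : x * a ∈ α
      · by_cases hxα : x ∈ α
        · rcases hcross with ⟨_, hab⟩ | ⟨hxn, _⟩
          · refine ihb (x * a) (rmul_R x hx a ha) ?_
            left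
            exact ⟨hxa, by rwa [← mul_assoc] at hab⟩
          · exact absurd hxα hxn
        · exact iha x hx (Or.inr ⟨hxα, hxa⟩)
      · by_cases hxα : x ∈ α
        · exact iha x hx (Or.inl ⟨hxα, hxa⟩)
        · rcases hcross with ⟨hxm, _⟩ | ⟨_, hab⟩
          · exact absurd hxm hxα
          · refine ihb (x * a) (rmul_R x hx a ha) ?_
            right
            exact ⟨hxa, by rwa [← mul_assoc] at hab⟩
    | inv a ha iha =>
      intro x hx hcross
      have hx' : x * a⁻¹ ∈ R := rmul_R x hx a⁻¹ (H.inv_mem ha)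
      have hxa : x * a⁻¹ * a = x := by group
      refine iha (x * a⁻¹) hx' ?_
      rw [hxa]
      tauto
  -- if there is a crossing, the reflection stabilizes R
  have stab : (∃ w ∈ R, ∃ u : B, (u = s' ∨ u = t') ∧ (w ∈ α ∧ w * cs.simple u ∉ α)) →
      (fun x => r * x) '' R = R := by
    rintro ⟨w, hwR, u, hu, hwα, hwuα⟩
    have h1 : cs.length (v⁻¹ * w) < cs.length (cs.simple s * (v⁻¹ * w)) := (mem_α w).mp hwα
    have h2 : cs.length (cs.simple s * (v⁻¹ * w * cs.simple u)) <
        cs.length (v⁻¹ * w * cs.simple u) := by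
      have h2' := (notmem_α (w * cs.simple u)).mp hwuα
      rw [show v⁻¹ * (w * cs.simple u) = v⁻¹ * w * cs.simple u from (mul_assoc v⁻¹ w (cs.simple u)).symm] at h2'
      exact h2'
    have hlift : cs.simple s * (v⁻¹ * w) = (v⁻¹ * w) * cs.simple u := by
      apply lifting cs h1
      exact h2
    have hrw : r = w * cs.simple u * w⁻¹ := by
      rw [hr]
      have hss : cs.simple s = (v⁻¹ * w) * cs.simple u * (v⁻¹ * w)⁻¹ := by
        rw [show (v⁻¹ * w) * cs.simple u = v⁻¹ * w * cs.simple u from rfl, ← hlift]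
        group
      rw [hss]
      group
    obtain ⟨h, hh, rfl⟩ := (mem_R w).mp hwR
    have hu' : cs.simple u ∈ H := by rcases hu with rfl | rfl <;> assumption
    have hrH : ∀ x ∈ R, r * x ∈ R := by
      intro x hxR
      obtain ⟨g, hg, rfl⟩ := (mem_R x).mp hxR
      refine (mem_R _).mpr ⟨h * cs.simple u * h⁻¹ * g, ?_, ?_⟩
      · exact H.mul_mem (H.mul_mem (H.mul_mem hh hu') (H.inv_mem hh)) hg
      · rw [hrw]; group
    apply Set.eq_of_subset_of_subset
    · rintro y ⟨x, hxR, rfl⟩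
      exact hrH x hxR
    · intro x hxR
      refine ⟨r * x, hrH x hxR, ?_⟩
      show r * (r * x) = x
      rw [← mul_assoc, hrr, one_mul]
  -- exclusivity helpers
  have not_stab_of_sub : R ⊆ α → ¬((fun x => r * x) '' R = R) := by
    intro hsub heq
    have hrc : r * c ∈ R := by rw [← heq]; exact ⟨c, hcR, rfl⟩
    have hcα : c ∈ α := hsub hcR
    have hrcα : r * c ∈ α := hsub hrc
    exact ((r_mem_iff c).mp hrcα) hcα
  have not_stab_of_empty : R ∩ α = ∅ → ¬((fun x => r * x) '' R = R) := by
    intro hemp heq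
    have hrc : r * c ∈ R := by rw [← heq]; exact ⟨c, hcR, rfl⟩
    have hcα : c ∉ α := fun hmem => Set.eq_empty_iff_forall_notMem.mp hemp c ⟨hcR, hmem⟩
    have hrcα : r * c ∈ α := (r_mem_iff c).mpr hcα
    exact Set.eq_empty_iff_forall_notMem.mp hemp (r * c) ⟨hrc, hrcα⟩
  by_cases hsub : R ⊆ α
  · left
    refine ⟨hsub, ?_, not_stab_of_sub hsub⟩
    intro hemp
    exact Set.eq_empty_iff_forall_notMem.mp hemp c ⟨hcR, hsub hcR⟩
  · by_cases hemp : R ∩ α = ∅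
    · right; left
      exact ⟨hsub, hemp, not_stab_of_empty hemp⟩
    · right; right
      refine ⟨hsub, hemp, ?_⟩
      obtain ⟨x, hxR, hxα⟩ := Set.nonempty_iff_ne_empty.mpr hemp
      obtain ⟨y, hyR, hyα⟩ := Set.not_subset.mp hsub
      obtain ⟨hx, hhx, rfl⟩ := (mem_R x).mp hxR
      obtain ⟨hy, hhy, rfl⟩ := (mem_R y).mp hyR
      have hgH : (c * hx)⁻¹ * (c * hy) ∈ H := by
        have hx2 : (c * hx)⁻¹ * (c * hy) = hx⁻¹ * hy := by group
        rw [hx2]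
        exact H.mul_mem (H.inv_mem hhx) hhy
      have hxy : (c * hx) * ((c * hx)⁻¹ * (c * hy)) = c * hy := by group
      obtain ⟨w, hwR, u, hu, hcr⟩ := crossing _ hgH (c * hx) hxR (by
        left
        rw [hxy]
        exact ⟨hxα, hyα⟩)
      apply stab
      rcases hcr with ⟨hw1, hw2⟩ | ⟨hw1, hw2⟩
      · exact ⟨w, hwR, u, hu, hw1, hw2⟩
      · have hu' : cs.simple u ∈ H := by rcases hu with rfl | rfl <;> assumption
        refine ⟨w * cs.simple u, rmul_R w hwR _ hu', u, hu, hw2, ?_⟩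
        rwa [show w * cs.simple u * cs.simple u = w by
          rw [mul_assoc, cs.simple_mul_simple_self, mul_one]]
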